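/- arXiv:1410.5878 — 3 statements merged into one kernel-verified Lean document; each statement's English description precedes it below -/
import Mathlib

section
/- Let X, Y be topological spaces and let T : C(X, ℝ) → C(Y, ℝ) be a lattice homomorphism (linear and preserving absolute values). Then T(√(f² + g²)) = √(T(f)² + T(g)²) for all f, g ∈ C(X, ℝ). -/
/-!
`√(p² + q²)` is the largest value of `u p + v q` on the unit disc `u² + v² ≤ 1`. Since
`|u f + v g| ≤ √(f² + g²)` for each such `(u, v)` and `T` is positive and commutes with `|·|`,
`√((Tf)² + (Tg)²) ≤ T √(f² + g²)`. Conversely, `√(f² + g²)` lies between `cos (π / 2n)` times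
itself and the maximum of the `2n + 1` forms in the directions `kπ / n`, `|k| ≤ n`; as `T`
preserves finite suprema, this gives `cos (π / 2n) · T √(f² + g²) ≤ √((Tf)² + (Tg)²)`, and we
let `n → ∞`.
-/

noncomputable def boxplus {X : Type*} [TopologicalSpace X]
    (f g : C(X, ℝ)) : C(X, ℝ) :=
  ⟨fun x => Real.sqrt (f x ^ 2 + g x ^ 2), by continuity⟩

open Real Filter Topology

section VectorLattice

variable {E F : Type*} [Lattice E] [AddCommGroup E] [IsOrderedAddMonoid E] [Module ℝ E]
  [Lattice F] [AddCommGroup F] [IsOrderedAddMonoid F] [Module ℝ F] {T : E →ₗ[ℝ] F}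

theorem LinearMap.monotone_of_map_abs (hT : ∀ f, T |f| = |T f|) : Monotone T := by
  intro f g hfg
  have : 0 ≤ T (g - f) := by
    rw [← abs_of_nonneg (sub_nonneg.2 hfg), hT]
    exact abs_nonneg _
  rwa [map_sub, sub_nonneg] at this

theorem LinearMap.map_sup_of_map_abs (hT : ∀ f, T |f| = |T f|) (f g : E) :
    T (f ⊔ g) = T f ⊔ T g := by
  rw [sup_eq_half_smul_add_add_abs_sub' ℝ, map_smul, map_add, map_add, hT, map_sub,
    ← sup_eq_half_smul_add_add_abs_sub' ℝ]

theorem LinearMap.map_finset_sup'_of_map_abs (hT : ∀ f, T |f| = |T f|) {ι : Type*}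
    {s : Finset ι} (hs : s.Nonempty) (f : ι → E) : T (s.sup' hs f) = s.sup' hs (T ∘ f) :=
  map_finset_sup' (⟨T, T.map_sup_of_map_abs hT⟩ : SupHom E F) hs f

end VectorLattice

theorem abs_mul_add_mul_le_sqrt {u v : ℝ} (huv : u ^ 2 + v ^ 2 ≤ 1) (p q : ℝ) :
    |u * p + v * q| ≤ √(p ^ 2 + q ^ 2) :=
  -- Lagrange: `(u p + v q)² + (u q - v p)² = (u² + v²)(p² + q²)`
  abs_le_sqrt (by nlinarith [sq_nonneg (u * q - v * p), sq_nonneg p, sq_nonneg q])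

theorem sqrt_le_of_forall_mul_add_mul_le {p q c : ℝ}
    (h : ∀ u v : ℝ, u ^ 2 + v ^ 2 ≤ 1 → u * p + v * q ≤ c) : √(p ^ 2 + q ^ 2) ≤ c := by
  rcases (sqrt_nonneg (p ^ 2 + q ^ 2)).eq_or_lt with h0 | hr
  · rw [← h0]; simpa using h 0 0 (by norm_num)
  have hr2 : √(p ^ 2 + q ^ 2) ^ 2 = p ^ 2 + q ^ 2 := sq_sqrt (by positivity)
  generalize √(p ^ 2 + q ^ 2) = r at hr hr2 ⊢
  have hunit : (p / r) ^ 2 + (q / r) ^ 2 ≤ 1 := by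
    rw [div_pow, div_pow, ← add_div, ← hr2, div_self (by positivity)]
  calc r = p / r * p + q / r * q := by field_simp; linarith
    _ ≤ c := h _ _ hunit

theorem exists_cos_mul_sqrt_le_cos_mul_add_sin_mul {n : ℕ} (hn : 0 < n) (p q : ℝ) :
    ∃ k ∈ Finset.Icc (-(n : ℤ)) n,
      cos (π / (2 * n)) * √(p ^ 2 + q ^ 2) ≤ cos (k * π / n) * p + sin (k * π / n) * q := by
  have hn' : (0 : ℝ) < n := Nat.cast_pos.2 hn
  set z : ℂ := ⟨p, q⟩
  set α := Complex.arg z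
  set k := round (α * n / π)
  have hround := abs_le.1 (abs_sub_round (α * n / π))
  have hα : α * n / π ∈ Set.Ioc (-(n : ℝ)) n := by
    constructor
    · rw [lt_div_iff₀ pi_pos]; nlinarith [Complex.neg_pi_lt_arg z]
    · rw [div_le_iff₀ pi_pos]; nlinarith [Complex.arg_le_pi z]
  refine ⟨k, Finset.mem_Icc.2 ⟨?_, ?_⟩, ?_⟩
  · have : ((-(n : ℤ) - 1 : ℤ) : ℝ) < k := by push_cast; linarith [hα.1]
    have := Int.cast_lt.1 this
    omega
  · have : (k : ℝ) < ((n + 1 : ℤ) : ℝ) := by push_cast; linarith [hα.2]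
    have := Int.cast_lt.1 this
    omega
  have hdist : |α - k * π / n| ≤ π / (2 * n) := by
    have : α - k * π / n = (α * n / π - k) * (π / n) := by field_simp
    rw [this, abs_mul, abs_of_pos (by positivity : 0 < π / n)]
    calc |α * n / π - k| * (π / n) ≤ 1 / 2 * (π / n) := by gcongr; exact abs_sub_round _
      _ = π / (2 * n) := by ring
  have hpolar : cos (k * π / n) * p + sin (k * π / n) * q = ‖z‖ * cos (α - k * π / n) := by
    rw [cos_sub]
    have hp : ‖z‖ * cos α = p := Complex.norm_mul_cos_arg z
    have hq : ‖z‖ * sin α = q := Complex.norm_mul_sin_arg z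
    rw [← hp, ← hq]
    ring
  have hcos : cos (π / (2 * n)) ≤ cos (α - k * π / n) := by
    rw [← cos_abs (α - _)]
    refine cos_le_cos_of_nonneg_of_le_pi (abs_nonneg _) ?_ hdist
    rw [div_le_iff₀ (by positivity)]
    nlinarith [pi_pos, (Nat.one_le_cast.2 hn : (1 : ℝ) ≤ n)]
  rw [hpolar, show √(p ^ 2 + q ^ 2) = ‖z‖ from (Complex.norm_eq_sqrt_sq_add_sq z).symm, mul_comm]
  exact mul_le_mul_of_nonneg_left hcos (norm_nonneg z)

section Boxplus

variable {X Y : Type*} [TopologicalSpace X] [TopologicalSpace Y]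

theorem abs_smul_add_smul_le_boxplus {u v : ℝ} (huv : u ^ 2 + v ^ 2 ≤ 1) (f g : C(X, ℝ)) :
    |u • f + v • g| ≤ boxplus f g :=
  ContinuousMap.le_def.2 fun x => abs_mul_add_mul_le_sqrt huv (f x) (g x)

theorem cos_smul_boxplus_le_sup' {n : ℕ} (hn : 0 < n) (f g : C(X, ℝ)) :
    cos (π / (2 * n)) • boxplus f g ≤ (Finset.Icc (-(n : ℤ)) n).sup' (by simp)
      (fun k : ℤ => cos (k * π / n) • f + sin (k * π / n) • g) := by
  refine ContinuousMap.le_def.2 fun x => ?_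
  obtain ⟨k, hk, hle⟩ := exists_cos_mul_sqrt_le_cos_mul_add_sin_mul hn (f x) (g x)
  rw [ContinuousMap.sup'_apply]
  exact Finset.le_sup'_of_le _ hk hle

variable {T : C(X, ℝ) →ₗ[ℝ] C(Y, ℝ)}

theorem boxplus_le_map_boxplus (hT : ∀ f, T |f| = |T f|) (f g : C(X, ℝ)) :
    boxplus (T f) (T g) ≤ T (boxplus f g) := ContinuousMap.le_def.2 fun y =>
  sqrt_le_of_forall_mul_add_mul_le fun u v huv => calc
    u * T f y + v * T g y ≤ |T (u • f + v • g)| y := by simpa using le_abs_self _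
    _ = T |u • f + v • g| y := by rw [hT]
    _ ≤ T (boxplus f g) y :=
      ContinuousMap.le_def.1 (T.monotone_of_map_abs hT (abs_smul_add_smul_le_boxplus huv f g)) y

theorem map_boxplus_le_boxplus (hT : ∀ f, T |f| = |T f|) (f g : C(X, ℝ)) :
    T (boxplus f g) ≤ boxplus (T f) (T g) := by
  refine ContinuousMap.le_def.2 fun y => ?_
  have hbound (n : ℕ) (hn : 0 < n) :
      cos (π / (2 * n)) * T (boxplus f g) y ≤ boxplus (T f) (T g) y := calc
    _ = T (cos (π / (2 * n)) • boxplus f g) y := by simp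
    _ ≤ _ :=
      ContinuousMap.le_def.1 (T.monotone_of_map_abs hT (cos_smul_boxplus_le_sup' hn f g)) y
    _ = (Finset.Icc (-(n : ℤ)) n).sup' (by simp)
          (fun k : ℤ => cos (k * π / n) * T f y + sin (k * π / n) * T g y) := by
      rw [T.map_finset_sup'_of_map_abs hT, ContinuousMap.sup'_apply]
      simp
    _ ≤ _ := Finset.sup'_le _ _ fun k _ =>
      (le_abs_self _).trans (abs_mul_add_mul_le_sqrt (cos_sq_add_sin_sq _).le _ _)
  have hlim : Tendsto (fun n : ℕ => cos (π / (2 * n)) * T (boxplus f g) y) atTop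
      (𝓝 (T (boxplus f g) y)) := by
    have h0 : Tendsto (fun n : ℕ => π / (2 * n)) atTop (𝓝 0) := by
      simpa [div_div, mul_comm] using (tendsto_const_div_atTop_nhds_zero_nat π).div_const 2
    simpa using ((continuous_cos.tendsto 0).comp h0).mul_const (T (boxplus f g) y)
  exact le_of_tendsto hlim (eventually_gt_atTop 0 |>.mono hbound)

end Boxplus

theorem stmt_14 {X Y : Type*} [TopologicalSpace X] [TopologicalSpace Y]
    (T : C(X, ℝ) →ₗ[ℝ] C(Y, ℝ))
    (hT : ∀ f : C(X, ℝ), T |f| = |T f|) :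
    ∀ f g : C(X, ℝ), T (boxplus f g) = boxplus (T f) (T g) := fun f g =>
  le_antisymm (map_boxplus_le_boxplus hT f g) (boxplus_le_map_boxplus hT f g)
end

section
/- Let X, Y be topological spaces and let T : C(X, ℝ) → C(Y, ℝ) be a lattice homomorphism. Then T(√(|f·g|)) = √(|T(f)·T(g)|) for all f, g ∈ C(X, ℝ). -/
/-!
For `t > 0` and `a, b ≥ 0` we have `min (t * a) (t⁻¹ * b) ≤ √(a * b) ≤ max (t * a) (t⁻¹ * b)`,
and `√(a * b)` is the only number with this property for every `t`. Applied pointwise to `|f|`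
and `|g|`, this squeezes `√|f * g|` between the lattice expressions `t • |f| ⊓ t⁻¹ • |g|` and
`t • |f| ⊔ t⁻¹ • |g|`. A linear map preserving `|·|` preserves `⊓`, `⊔` and the order, so at each
point `y` the value `T (√|f * g|) y` is squeezed in the same way by `|T f y|` and `|T g y|`.
-/

noncomputable def boxtimes {X : Type*} [TopologicalSpace X]
    (f g : C(X, ℝ)) : C(X, ℝ) :=
  ⟨fun x => Real.sqrt |f x * g x|, by continuity⟩

namespace LinearMap

variable {R M N : Type*} [Semiring R] [Invertible (2 : R)]
  [Lattice M] [AddCommGroup M] [IsOrderedAddMonoid M] [Module R M]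
  [Lattice N] [AddCommGroup N] [IsOrderedAddMonoid N] [Module R N]
  {T : M →ₗ[R] N}

theorem map_inf_of_map_abs (hT : ∀ x, T |x| = |T x|) (x y : M) :
    T (x ⊓ y) = T x ⊓ T y := by
  rw [inf_eq_half_smul_add_sub_abs_sub R, inf_eq_half_smul_add_sub_abs_sub R, map_smul,
    map_sub, map_add, hT, map_sub]

theorem map_sup_of_map_abs_s15 (hT : ∀ x, T |x| = |T x|) (x y : M) :
    T (x ⊔ y) = T x ⊔ T y := by
  rw [sup_eq_half_smul_add_add_abs_sub R, sup_eq_half_smul_add_add_abs_sub R, map_smul,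
    map_add, map_add, hT, map_sub]

theorem monotone_of_map_abs_s15 (hT : ∀ x, T |x| = |T x|) : Monotone T := fun x y hxy => by
  rw [← inf_eq_left.mpr hxy, map_inf_of_map_abs hT]
  exact inf_le_right

end LinearMap

namespace Real

theorem min_le_sqrt_mul {x y : ℝ} (hx : 0 ≤ x) (hy : 0 ≤ y) : min x y ≤ √(x * y) :=
  (le_sqrt (le_min hx hy) (mul_nonneg hx hy)).mpr <|
    pow_two (min x y) ▸ mul_le_mul (min_le_left x y) (min_le_right x y) (le_min hx hy) hx

theorem sqrt_mul_le_max {x y : ℝ} (hx : 0 ≤ x) (hy : 0 ≤ y) : √(x * y) ≤ max x y :=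
  (sqrt_le_left (le_max_of_le_left hx)).mpr <|
    pow_two (max x y) ▸ mul_le_mul (le_max_left x y) (le_max_right x y) hy (le_max_of_le_left hx)

theorem nonpos_of_forall_pos_le_mul {b c : ℝ} (h : ∀ t > 0, c ≤ t * b) : c ≤ 0 := by
  have hlim : Filter.Tendsto (fun t => t * b) (nhdsWithin 0 (Set.Ioi 0)) (nhds 0) :=
    ((continuous_mul_const b).tendsto' 0 0 (zero_mul b)).mono_left nhdsWithin_le_nhds
  exact ge_of_tendsto hlim (eventually_nhdsWithin_of_forall h)

theorem eq_sqrt_mul_of_forall_min_le_le_max {a b c : ℝ} (ha : 0 ≤ a) (hb : 0 ≤ b)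
    (hmin : ∀ t > 0, min (t * a) (t⁻¹ * b) ≤ c) (hmax : ∀ t > 0, c ≤ max (t * a) (t⁻¹ * b)) :
    c = √(a * b) := by
  have hc : 0 ≤ c := (le_min (by positivity) (by positivity)).trans (hmin 1 one_pos)
  rcases ha.eq_or_lt with rfl | ha
  · have : c ≤ 0 := nonpos_of_forall_pos_le_mul (b := b) fun t ht => by
      simpa [max_eq_right (by positivity : 0 ≤ t * b)] using hmax t⁻¹ (inv_pos.mpr ht)
    simpa using le_antisymm this hc
  rcases hb.eq_or_lt with rfl | hb
  · have : c ≤ 0 := nonpos_of_forall_pos_le_mul (b := a) fun t ht => by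
      simpa [max_eq_left (by positivity : 0 ≤ t * a)] using hmax t ht
    simpa using le_antisymm this hc
  have hta : √b / √a * a = √(a * b) := by
    rw [sqrt_mul ha.le]
    field_simp
    exact (sq_sqrt ha.le).symm
  have htb : (√b / √a)⁻¹ * b = √(a * b) := by
    rw [sqrt_mul ha.le, inv_div]
    field_simp
    exact (sq_sqrt hb.le).symm
  have ht : 0 < √b / √a := by positivity
  refine le_antisymm ?_ ?_
  · simpa only [hta, htb, max_self] using hmax _ ht
  · simpa only [hta, htb, min_self] using hmin _ ht

end Real

section boxtimes

variable {X : Type*} [TopologicalSpace X] (f g : C(X, ℝ)) {t : ℝ}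

@[simp]
theorem boxtimes_apply (x : X) : boxtimes f g x = √|f x * g x| :=
  rfl

theorem inf_le_boxtimes (ht : 0 < t) : (t • |f|) ⊓ (t⁻¹ • |g|) ≤ boxtimes f g := fun x => by
  simpa [abs_mul, ht.le, ht.ne', mul_mul_mul_comm] using
    Real.min_le_sqrt_mul (mul_nonneg ht.le (abs_nonneg (f x)))
      (mul_nonneg (inv_nonneg.mpr ht.le) (abs_nonneg (g x)))

theorem boxtimes_le_sup (ht : 0 < t) : boxtimes f g ≤ (t • |f|) ⊔ (t⁻¹ • |g|) := fun x => by
  simpa [abs_mul, ht.le, ht.ne', mul_mul_mul_comm] using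
    Real.sqrt_mul_le_max (mul_nonneg ht.le (abs_nonneg (f x)))
      (mul_nonneg (inv_nonneg.mpr ht.le) (abs_nonneg (g x)))

end boxtimes

theorem stmt_15 {X Y : Type*} [TopologicalSpace X] [TopologicalSpace Y]
    (T : C(X, ℝ) →ₗ[ℝ] C(Y, ℝ))
    (hT : ∀ f : C(X, ℝ), T |f| = |T f|) :
    ∀ f g : C(X, ℝ), T (boxtimes f g) = boxtimes (T f) (T g) := by
  intro f g
  ext y
  rw [boxtimes_apply, abs_mul]
  refine Real.eq_sqrt_mul_of_forall_min_le_le_max (abs_nonneg _) (abs_nonneg _)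
    (fun t ht => ?_) (fun t ht => ?_)
  · simpa [LinearMap.map_inf_of_map_abs hT, hT] using
      LinearMap.monotone_of_map_abs_s15 hT (inf_le_boxtimes f g ht) y
  · simpa [LinearMap.map_sup_of_map_abs_s15 hT, hT] using
      LinearMap.monotone_of_map_abs_s15 hT (boxtimes_le_sup f g ht) y
end

section
/- For nonnegative reals x, y and the dyadic partition points θ ∈ Pₙ := { lπ/2^{n+1} : l ∈ {1,...,2ⁿ} }, the sequence σₙ := max over θ ∈ Pₙ of (x·cos θ + y·sin θ) is monotone increasing in n and converges to √(x² + y²), with the error bound √(x²+y²) − σₙ ≤ (π/2^{n+1})·(x + y). -/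
/-!
Write `(x, y) = r (cos φ, sin φ)` with `r = √(x² + y²)` and `φ ∈ [0, π/2]`, so that
`x cos θ + y sin θ = r cos (θ - φ) ≤ r` with equality at `θ = φ`. The grid `Pₙ` has mesh
`π / 2ⁿ⁺¹` and its points reach `π/2`, so some `θ ∈ Pₙ` lies within one mesh of `φ`; since `cos` and
`sin` are `1`-Lipschitz, moving from `φ` to `θ` costs at most `(π / 2ⁿ⁺¹) (x + y)`. Monotonicity
holds because `Pₙ ⊆ Pₙ₊₁`.
-/

open Real Set Filter Topology

lemma mul_cos_add_mul_sin_le_sqrt (x y θ : ℝ) :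
    x * cos θ + y * sin θ ≤ √(x ^ 2 + y ^ 2) := by
  refine (le_abs_self _).trans (Real.abs_le_sqrt ?_)
  nlinarith [sq_nonneg (x * sin θ - y * cos θ), sin_sq_add_cos_sq θ]

lemma exists_mul_cos_add_mul_sin_eq_sqrt {x y : ℝ} (hx : 0 ≤ x) (hy : 0 ≤ y) :
    ∃ φ ∈ Icc 0 (π / 2), x * cos φ + y * sin φ = √(x ^ 2 + y ^ 2) := by
  set z : ℂ := ⟨x, y⟩
  have hnorm : ‖z‖ = √(x ^ 2 + y ^ 2) := Complex.norm_eq_sqrt_sq_add_sq z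
  refine ⟨z.arg, ⟨Complex.arg_nonneg_iff.2 hy, Complex.arg_le_pi_div_two_iff.2 (.inl hx)⟩, ?_⟩
  have hre : ‖z‖ * cos z.arg = x := Complex.norm_mul_cos_arg z
  have him : ‖z‖ * sin z.arg = y := Complex.norm_mul_sin_arg z
  rw [← hnorm, ← hre, ← him]
  linear_combination ‖z‖ * sin_sq_add_cos_sq z.arg

lemma mul_cos_add_mul_sin_sub_le {x y θ φ δ : ℝ} (hx : 0 ≤ x) (hy : 0 ≤ y) (h : |θ - φ| ≤ δ) :
    (x * cos φ + y * sin φ) - (x * cos θ + y * sin θ) ≤ δ * (x + y) := by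
  have hcos : cos φ - cos θ ≤ δ :=
    (le_abs_self _).trans <| (abs_cos_sub_cos_le φ θ).trans (abs_sub_comm φ θ ▸ h)
  have hsin : sin φ - sin θ ≤ δ :=
    (le_abs_self _).trans <| (abs_sin_sub_sin_le φ θ).trans (abs_sub_comm φ θ ▸ h)
  linarith [mul_le_mul_of_nonneg_left hcos hx, mul_le_mul_of_nonneg_left hsin hy]

lemma exists_nat_abs_mul_sub_le {h φ : ℝ} {N : ℕ} (hh : 0 < h) (hN : 1 ≤ N)
    (hφ : φ ∈ Icc 0 (N * h)) :
    ∃ l : ℕ, 1 ≤ l ∧ l ≤ N ∧ |l * h - φ| ≤ h := by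
  have hq : 0 ≤ φ / h := div_nonneg hφ.1 hh.le
  have hceil : ⌈φ / h⌉₊ ≤ N := Nat.ceil_le.2 <| (div_le_iff₀ hh).2 hφ.2
  have hφh : φ / h * h = φ := div_mul_cancel₀ φ hh.ne'
  refine ⟨max 1 ⌈φ / h⌉₊, le_max_left _ _, max_le hN hceil, abs_le.2 ?_⟩
  rcases le_total ⌈φ / h⌉₊ 1 with hc | hc
  · have : φ / h ≤ 1 := (Nat.le_ceil _).trans (by exact_mod_cast hc)
    rw [max_eq_left hc, Nat.cast_one]
    constructor <;> nlinarith
  · rw [max_eq_right hc]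
    constructor <;> nlinarith [Nat.le_ceil (φ / h), Nat.ceil_lt_add_one hq]

def dyadicValues (x y : ℝ) (n : ℕ) : Set ℝ :=
  {z : ℝ | ∃ l : ℕ, 1 ≤ l ∧ l ≤ 2 ^ n ∧
    z = x * cos (l * π / 2 ^ (n + 1)) + y * sin (l * π / 2 ^ (n + 1))}

namespace dyadicValues

variable (x y : ℝ) (n : ℕ)

lemma nonempty : (dyadicValues x y n).Nonempty :=
  ⟨_, 1, le_rfl, Nat.one_le_two_pow, rfl⟩

lemma le_sqrt : ∀ z ∈ dyadicValues x y n, z ≤ √(x ^ 2 + y ^ 2) := by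
  rintro z ⟨l, -, -, rfl⟩
  exact mul_cos_add_mul_sin_le_sqrt x y _

lemma bddAbove : BddAbove (dyadicValues x y n) := ⟨_, le_sqrt x y n⟩

lemma subset_succ : dyadicValues x y n ⊆ dyadicValues x y (n + 1) := by
  rintro z ⟨l, hl1, hl2, rfl⟩
  refine ⟨2 * l, by omega, by rw [pow_succ]; omega, ?_⟩
  push_cast
  ring_nf

lemma sSup_le_sqrt : sSup (dyadicValues x y n) ≤ √(x ^ 2 + y ^ 2) :=
  csSup_le (nonempty x y n) (le_sqrt x y n)

lemma sqrt_sub_sSup_le {x y : ℝ} (hx : 0 ≤ x) (hy : 0 ≤ y) (n : ℕ) :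
    √(x ^ 2 + y ^ 2) - sSup (dyadicValues x y n) ≤ π / 2 ^ (n + 1) * (x + y) := by
  obtain ⟨φ, hφ, hφr⟩ := exists_mul_cos_add_mul_sin_eq_sqrt hx hy
  have hmesh : 0 < π / 2 ^ (n + 1) := by positivity
  have hreach : ((2 ^ n : ℕ) : ℝ) * (π / 2 ^ (n + 1)) = π / 2 := by
    push_cast; field_simp; ring
  obtain ⟨l, hl1, hl2, hl⟩ :=
    exists_nat_abs_mul_sub_le hmesh Nat.one_le_two_pow (hreach ▸ hφ)
  have hmem : x * cos (l * π / 2 ^ (n + 1)) + y * sin (l * π / 2 ^ (n + 1))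
      ∈ dyadicValues x y n := ⟨l, hl1, hl2, rfl⟩
  have hclose := mul_cos_add_mul_sin_sub_le hx hy (mul_div_assoc (l : ℝ) π _ ▸ hl)
  linarith [le_csSup (bddAbove x y n) hmem]

end dyadicValues

lemma tendsto_pi_div_two_pow_succ_mul (c : ℝ) :
    Tendsto (fun n : ℕ => π / 2 ^ (n + 1) * c) atTop (𝓝 0) := by
  have h2pow : Tendsto (fun n : ℕ => (2 : ℝ) ^ (n + 1)) atTop atTop :=
    (tendsto_pow_atTop_atTop_of_one_lt one_lt_two).comp (tendsto_add_atTop_nat 1)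
  simpa using (tendsto_const_nhds.div_atTop h2pow).mul_const c

open Real in
theorem stmt_19 (x y : ℝ) (hx : 0 ≤ x) (hy : 0 ≤ y) (σ : ℕ → ℝ)
    (hσ : ∀ n, σ n = sSup {z : ℝ | ∃ l : ℕ, 1 ≤ l ∧ l ≤ 2 ^ n ∧
      z = x * cos (l * π / 2 ^ (n + 1)) + y * sin (l * π / 2 ^ (n + 1))}) :
    Monotone σ ∧
    Filter.Tendsto σ Filter.atTop (nhds (Real.sqrt (x ^ 2 + y ^ 2))) ∧
    ∀ n, Real.sqrt (x ^ 2 + y ^ 2) - σ n ≤ (π / 2 ^ (n + 1)) * (x + y) := by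
  obtain rfl : σ = fun n => sSup (dyadicValues x y n) := funext hσ
  have herr := dyadicValues.sqrt_sub_sSup_le hx hy
  refine ⟨monotone_nat_of_le_succ fun n => ?_, ?_, herr⟩
  · exact csSup_le_csSup (dyadicValues.bddAbove x y _) (dyadicValues.nonempty x y n)
      (dyadicValues.subset_succ x y n)
  · have hlower := (tendsto_pi_div_two_pow_succ_mul (x + y)).const_sub √(x ^ 2 + y ^ 2)
    rw [sub_zero] at hlower
    exact tendsto_of_tendsto_of_tendsto_of_le_of_le hlower tendsto_const_nhds
      (fun n => by linarith [herr n]) (dyadicValues.sSup_le_sqrt x y)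
end
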